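/- arXiv:1906.00668 — 3 statements merged into one kernel-verified Lean document; each statement's English description precedes it below -/
import Mathlib

section
/- Let Σ11 and Σ22 be positive definite real C×C matrices. For any real C×C matrix φ such that the block matrix [[Σ11, φ], [φ^T, Σ22]] is positive semidefinite, we have tr(φ) ≤ tr((Σ22^{1/2} Σ11 Σ22^{1/2})^{1/2}). -/
/-!
Compressing the positive semidefinite block matrix by the column `[X; -Y]` gives
`2 tr(Xᵀ φ Y) ≤ tr(Xᵀ S11 X) + tr(Yᵀ S22 Y)` for all `X`, `Y`. Taking `K = N^{1/2}`,
`X = R22 K⁻¹` and `Y = R22⁻¹ K`, we have `Y Xᵀ = 1`, so the left side is `2 tr φ`, while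
`Xᵀ S11 X = K⁻¹ (R22 S11 R22) K⁻¹ = K⁻¹ K⁴ K⁻¹ = N` and `Yᵀ S22 Y = K R22⁻¹ R22² R22⁻¹ K = N`.
-/

open Matrix

namespace Matrix

variable {n p m : Type*} [Fintype n] [Fintype p] [Fintype m]

theorem PosSemidef.two_mul_trace_le_of_fromBlocks {A : Matrix n n ℝ} {B : Matrix n p ℝ}
    {D : Matrix p p ℝ} (hM : (fromBlocks A B Bᵀ D).PosSemidef) (X : Matrix n m ℝ)
    (Y : Matrix p m ℝ) :
    2 * (Xᵀ * B * Y).trace ≤ (Xᵀ * A * X).trace + (Yᵀ * D * Y).trace := by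
  have h := (hM.conjTranspose_mul_mul_same (fromRows X (-Y))).trace_nonneg
  have hsym : (Yᵀ * Bᵀ * X).trace = (Xᵀ * B * Y).trace := by
    rw [← trace_transpose]
    simp only [transpose_mul, transpose_transpose, Matrix.mul_assoc]
  rw [conjTranspose_fromRows_eq_fromCols_conjTranspose, Matrix.mul_assoc, fromBlocks_mul_fromRows,
    fromCols_mul_fromRows] at h
  simp only [conjTranspose_eq_transpose_of_trivial, transpose_neg, Matrix.mul_add, Matrix.mul_neg,
    Matrix.neg_mul, trace_add, trace_neg, Matrix.mul_assoc] at h hsym ⊢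
  linarith

theorem PosSemidef.two_mul_trace_le_of_fromBlocks_of_mul_transpose_eq_one [DecidableEq n]
    {A B D : Matrix n n ℝ} (hM : (fromBlocks A B Bᵀ D).PosSemidef)
    {X Y : Matrix n m ℝ} (hYX : Y * Xᵀ = 1) :
    2 * B.trace ≤ (Xᵀ * A * X).trace + (Yᵀ * D * Y).trace := by
  simpa [Matrix.mul_assoc, trace_mul_comm Xᵀ, hYX] using hM.two_mul_trace_le_of_fromBlocks X Y

end Matrix

theorem olkin_pukelsheim_trace_bound_general {C : ℕ}
    (S11 S22 R22 N φ : Matrix (Fin C) (Fin C) ℝ)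
    (hS11 : S11.PosDef)
    (hR22 : R22.PosDef) (hR22sq : R22 * R22 = S22)
    (hN : N.PosSemidef) (hNsq : N * N = R22 * S11 * R22)
    (hblk : (Matrix.fromBlocks S11 φ φᵀ S22).PosSemidef) :
    φ.trace ≤ N.trace := by
  obtain ⟨K, hK, rfl⟩ : ∃ K : Matrix (Fin C) (Fin C) ℝ, K.PosSemidef ∧ K * K = N := by
    open scoped MatrixOrder in
    exact ⟨CFC.sqrt N, (CFC.sqrt_nonneg N).posSemidef, CFC.sqrt_mul_sqrt_self N hN.nonneg⟩
  have hRu : IsUnit R22.det := (isUnit_iff_isUnit_det R22).mp hR22.isUnit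
  have hKu : IsUnit K.det := by
    rw [← isUnit_iff_isUnit_det, ← isUnit_mul_self_iff, ← isUnit_mul_self_iff, hNsq]
    exact (hR22.isUnit.mul hS11.isUnit).mul hR22.isUnit
  have hRt : R22ᵀ = R22 := hR22.isHermitian
  have hKt : Kᵀ = K := hK.isHermitian
  have hX : (R22 * K⁻¹)ᵀ * S11 * (R22 * K⁻¹) = K * K := by
    calc (R22 * K⁻¹)ᵀ * S11 * (R22 * K⁻¹) = K⁻¹ * (R22 * S11 * R22) * K⁻¹ := by
          simp only [transpose_mul, transpose_nonsing_inv, hRt, hKt, Matrix.mul_assoc]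
      _ = K * K := by
          simp only [← hNsq, Matrix.mul_assoc, nonsing_inv_mul_cancel_left _ _ hKu,
            mul_nonsing_inv _ hKu, Matrix.mul_one]
  have hY : (R22⁻¹ * K)ᵀ * S22 * (R22⁻¹ * K) = K * K := by
    simp only [← hR22sq, transpose_mul, transpose_nonsing_inv, hRt, hKt, Matrix.mul_assoc,
      nonsing_inv_mul_cancel_left _ _ hRu, mul_nonsing_inv_cancel_left _ _ hRu]
  have hYX : R22⁻¹ * K * (R22 * K⁻¹)ᵀ = 1 := by
    simp only [transpose_mul, transpose_nonsing_inv, hRt, hKt, Matrix.mul_assoc,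
      mul_nonsing_inv_cancel_left _ _ hKu, nonsing_inv_mul _ hRu]
  have htrace := hblk.two_mul_trace_le_of_fromBlocks_of_mul_transpose_eq_one hYX
  rw [hX, hY] at htrace
  linarith

/-- **Olkin–Pukelsheim trace bound.** Let `S11`, `S22` be positive definite,
`R22` the positive definite symmetric square root of `S22`, and `N` the positive
semidefinite symmetric square root of `R22 * S11 * R22 = S22^{1/2} S11 S22^{1/2}`.
For any real matrix `φ` such that the block matrix `[[S11, φ], [φᵀ, S22]]` is positive
semidefinite, `tr(φ) ≤ tr((S22^{1/2} S11 S22^{1/2})^{1/2})`. -/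
theorem olkin_pukelsheim_trace_bound {C : ℕ}
    (S11 S22 R22 N φ : Matrix (Fin C) (Fin C) ℝ)
    (hS11 : S11.PosDef) (hS22 : S22.PosDef)
    (hR22 : R22.PosDef) (hR22sq : R22 * R22 = S22)
    (hN : N.PosSemidef) (hNsq : N * N = R22 * S11 * R22)
    (hblk : (Matrix.fromBlocks S11 φ φᵀ S22).PosSemidef) :
    φ.trace ≤ N.trace :=
  olkin_pukelsheim_trace_bound_general S11 S22 R22 N φ hS11 hR22 hR22sq hN hNsq hblk
end

section
/- Let Σ11 and Σ22 be positive definite real C×C matrices and let φ* = Σ11 Σ22^{1/2} (Σ22^{1/2} Σ11 Σ22^{1/2})^{-1/2} Σ22^{1/2}. Then the block matrix [[Σ11, φ*], [φ*^T, Σ22]] is positive semidefinite and tr(φ*) = tr((Σ22^{1/2} Σ11 Σ22^{1/2})^{1/2}). -/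
open Matrix

/-!
Put `K = R22 N⁻¹ R22`, a symmetric matrix. Then `φ* = S11 K`, and `N² = R22 S11 R22` gives
`K S11 K = R22 R22 = S22`, so the block matrix is the congruence `[1 K]ᴴ S11 [1 K]` of the
positive definite `S11`. The trace identity is cyclicity:
`tr (S11 R22 N⁻¹ R22) = tr (R22 S11 R22 N⁻¹) = tr (N N N⁻¹) = tr N`.
-/

namespace Matrix

variable {m n R : Type*} [Fintype m] [Fintype n]

theorem PosSemidef.fromBlocks_mul_conjTranspose_mul [CommRing R] [PartialOrder R] [StarRing R]
    {A : Matrix m m R} (hA : A.PosSemidef) (K : Matrix m n R) :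
    (fromBlocks A (A * K) (Kᴴ * A) (Kᴴ * A * K)).PosSemidef := by
  classical
  have h := hA.conjTranspose_mul_mul_same (fromCols (1 : Matrix m m R) K)
  rw [conjTranspose_fromCols_eq_fromRows_conjTranspose, fromRows_mul, fromRows_mul_fromCols,
    conjTranspose_one, Matrix.one_mul] at h
  simpa only [Matrix.mul_one] using h

variable [DecidableEq m] [CommRing R]

theorem mul_inv_mul_mul_mul_inv_mul_of_mul_self_eq {A S N : Matrix m m R} (hN : IsUnit N.det)
    (h : N * N = S * A * S) : S * N⁻¹ * S * A * (S * N⁻¹ * S) = S * S := by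
  calc S * N⁻¹ * S * A * (S * N⁻¹ * S) = S * N⁻¹ * (S * A * S) * N⁻¹ * S := by
        simp only [Matrix.mul_assoc]
    _ = S * (N⁻¹ * N) * (N * N⁻¹) * S := by rw [← h]; simp only [Matrix.mul_assoc]
    _ = S * S := by rw [nonsing_inv_mul _ hN, mul_nonsing_inv _ hN, mul_one, mul_one]

theorem trace_mul_mul_inv_mul_of_mul_self_eq {A S N : Matrix m m R} (hN : IsUnit N.det)
    (h : N * N = S * A * S) : (A * S * N⁻¹ * S).trace = N.trace := by
  calc (A * S * N⁻¹ * S).trace = (S * A * S * N⁻¹).trace := by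
        rw [trace_mul_comm]; simp only [Matrix.mul_assoc]
    _ = N.trace := by rw [← h, Matrix.mul_assoc, mul_nonsing_inv _ hN, mul_one]

end Matrix

theorem olkin_pukelsheim_maximizer_general {C : ℕ}
    (S11 S22 R22 N : Matrix (Fin C) (Fin C) ℝ)
    (hS11 : S11.PosDef)
    (hR22 : R22.PosDef) (hR22sq : R22 * R22 = S22)
    (hN : N.PosDef) (hNsq : N * N = R22 * S11 * R22) :
    (Matrix.fromBlocks S11 (S11 * R22 * N⁻¹ * R22) (S11 * R22 * N⁻¹ * R22)ᵀ S22).PosSemidef ∧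
      (S11 * R22 * N⁻¹ * R22).trace = N.trace := by
  have hNdet : IsUnit N.det := isUnit_iff_ne_zero.mpr hN.det_pos.ne'
  refine ⟨?_, trace_mul_mul_inv_mul_of_mul_self_eq hNdet hNsq⟩
  set K := R22 * N⁻¹ * R22
  have hK : Kᴴ = K := by
    simp only [K, conjTranspose_mul, hR22.isHermitian.eq, hN.isHermitian.inv.eq, Matrix.mul_assoc]
  have hφ : S11 * R22 * N⁻¹ * R22 = S11 * K := by simp only [K, Matrix.mul_assoc]
  have hφT : (S11 * K)ᵀ = Kᴴ * S11 := by
    rw [← conjTranspose_eq_transpose_of_trivial, conjTranspose_mul, hS11.isHermitian.eq]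
  have hKS11K : Kᴴ * S11 * K = S22 := by
    rw [hK, ← hR22sq]
    exact mul_inv_mul_mul_mul_inv_mul_of_mul_self_eq hNdet hNsq
  rw [hφ, hφT, ← hKS11K]
  exact hS11.posSemidef.fromBlocks_mul_conjTranspose_mul K

/-- **the Olkin–Pukelsheim maximizer achieves the bound.** Let `S11`, `S22`
be positive definite, `R22` the positive definite symmetric square root of `S22`, and `N`
the positive definite symmetric square root of `R22 * S11 * R22`. With
`φ* = S11 S22^{1/2} (S22^{1/2} S11 S22^{1/2})^{-1/2} S22^{1/2} = S11 * R22 * N⁻¹ * R22`,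
the block matrix `[[S11, φ*], [φ*ᵀ, S22]]` is positive semidefinite and
`tr(φ*) = tr((S22^{1/2} S11 S22^{1/2})^{1/2})`. -/
theorem olkin_pukelsheim_maximizer {C : ℕ}
    (S11 S22 R22 N : Matrix (Fin C) (Fin C) ℝ)
    (hS11 : S11.PosDef) (hS22 : S22.PosDef)
    (hR22 : R22.PosDef) (hR22sq : R22 * R22 = S22)
    (hN : N.PosDef) (hNsq : N * N = R22 * S11 * R22) :
    (Matrix.fromBlocks S11 (S11 * R22 * N⁻¹ * R22) (S11 * R22 * N⁻¹ * R22)ᵀ S22).PosSemidef ∧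
      (S11 * R22 * N⁻¹ * R22).trace = N.trace :=
  olkin_pukelsheim_maximizer_general S11 S22 R22 N hS11 hR22 hR22sq hN hNsq
end

section
/- Let Σc and Σs be positive definite real C×C matrices and T = Σc^{-1/2}(Σc^{1/2} Σs Σc^{1/2})^{1/2} Σc^{-1/2}. Then tr(Σs (T^{-1})^T) = tr((Σc^{1/2} Σs Σc^{1/2})^{1/2}). -/
open Matrix

namespace Matrix

variable {n R : Type*} [Fintype n] [DecidableEq n] [CommRing R]

theorem inv_mul_mul_inv_inv {A B : Matrix n n R} (hA : IsUnit A.det) :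
    (A⁻¹ * B * A⁻¹)⁻¹ = A * B⁻¹ * A := by
  rw [mul_inv_rev, mul_inv_rev, nonsing_inv_nonsing_inv _ hA, mul_assoc]

theorem IsSymm.mul_inv_mul {A B : Matrix n n R} (hA : A.IsSymm) (hB : B.IsSymm) :
    (A * B⁻¹ * A).IsSymm := by
  rw [IsSymm, transpose_mul, transpose_mul, hA.eq, hB.inv.eq, mul_assoc]

theorem trace_mul_mul_inv_mul_of_mul_self_eq_s15 {A B S : Matrix n n R} (hB : IsUnit B.det)
    (hBsq : B * B = A * S * A) : (S * (A * B⁻¹ * A)).trace = B.trace :=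
  calc (S * (A * B⁻¹ * A)).trace = (B⁻¹ * (A * S * A)).trace := by
        rw [← mul_assoc, trace_mul_cycle, ← mul_assoc, trace_mul_comm]
    _ = B.trace := by rw [← hBsq, ← mul_assoc, nonsing_inv_mul _ hB, one_mul]

end Matrix

theorem ost_trace_cross_covariance_general {C : ℕ}
    (Ss Rc M : Matrix (Fin C) (Fin C) ℝ)
    (hRc : Rc.PosDef)
    (hM : M.PosDef) (hMsq : M * M = Rc * Ss * Rc) :
    (Ss * ((Rc⁻¹ * M * Rc⁻¹)⁻¹)ᵀ).trace = M.trace := by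
  have hRc_symm : Rc.IsSymm := isHermitian_iff_isSymm.mp hRc.1
  have hM_symm : M.IsSymm := isHermitian_iff_isSymm.mp hM.1
  rw [inv_mul_mul_inv_inv ((isUnit_iff_isUnit_det _).mp hRc.isUnit),
    (hRc_symm.mul_inv_mul hM_symm).eq]
  exact trace_mul_mul_inv_mul_of_mul_self_eq_s15 ((isUnit_iff_isUnit_det _).mp hM.isUnit) hMsq

/-- With `Rc` the positive definite symmetric square root of `Sc` and
`M` that of `Rc * Ss * Rc`, the OST map `T = Rc⁻¹ * M * Rc⁻¹` satisfies
`tr(Ss (T⁻¹)ᵀ) = tr((Sc^{1/2} Ss Sc^{1/2})^{1/2}) = tr M`. -/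
theorem ost_trace_cross_covariance {C : ℕ}
    (Sc Ss Rc M : Matrix (Fin C) (Fin C) ℝ)
    (hSc : Sc.PosDef) (hSs : Ss.PosDef)
    (hRc : Rc.PosDef) (hRcsq : Rc * Rc = Sc)
    (hM : M.PosDef) (hMsq : M * M = Rc * Ss * Rc) :
    (Ss * ((Rc⁻¹ * M * Rc⁻¹)⁻¹)ᵀ).trace = M.trace :=
  ost_trace_cross_covariance_general Ss Rc M hRc hM hMsq
end
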